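/- Let A ∈ B₊(H) and B ∈ 𝓛₊(A), the norm closure of {X ∈ B₊(H) : X ≤ cA for some c > 0}. Then the closure of the range of B is contained in the closure of the range of A. -/

import Mathlib

/-!
If `0 ≤ X ≤ c A`, then `X` vanishes on `ker A`: for `A x = 0` the two quadratic forms force
`⟪X x, x⟫ = 0`, and a positive operator with vanishing quadratic form at `x` kills `x`.
Vanishing on `ker A` is a closed condition, so it passes to every `B` in the norm closure of
`L₊(A)`, and so does positivity. For a symmetric operator `T` one has `R(T)ᗮ = ker T`, hence
`closure R(B) = (ker B)ᗮ ≤ (ker A)ᗮ = closure R(A)`.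
-/

variable {H : Type*} [NormedAddCommGroup H] [InnerProductSpace ℂ H] [CompleteSpace H]

/-- `L₊(A)`: the cone of nonnegative operators dominated by a positive multiple of `A`. -/
def Lplus (A : H →L[ℂ] H) : Set (H →L[ℂ] H) :=
  {B | B.IsPositive ∧ ∃ c : ℝ, 0 < c ∧ (c • A - B).IsPositive}

open RCLike

section

variable {𝕜 E : Type*} [RCLike 𝕜] [NormedAddCommGroup E] [InnerProductSpace 𝕜 E]

theorem LinearMap.IsPositive.apply_eq_zero_of_re_inner_eq_zero {T : E →ₗ[𝕜] E}
    (hT : T.IsPositive) {x : E} (hx : re (inner 𝕜 (T x) x) = 0) : T x = 0 := by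
  -- the form at `x - t • T x` is a nonnegative quadratic in `t` with linear coefficient `-2 ‖T x‖²`
  have hquad : ∀ t : ℝ,
      0 ≤ re (inner 𝕜 (T (T x)) (T x)) * (t * t) + (-2 * ‖T x‖ ^ 2) * t + 0 := by
    intro t
    have h := hT.re_inner_nonneg_left (x - (t : 𝕜) • T x)
    have hsymm : inner 𝕜 (T (T x)) x = inner 𝕜 (T x) (T x) := hT.isSymmetric _ _
    simp only [map_sub, map_smul, inner_sub_left, inner_sub_right, inner_smul_left,
      inner_smul_right, conj_ofReal, re_ofReal_mul, hsymm, inner_self_eq_norm_sq, hx] at h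
    linarith
  have hdiscrim := discrim_le_zero hquad
  rw [discrim] at hdiscrim
  simpa using (show ‖T x‖ ^ 2 = 0 by nlinarith)

theorem ContinuousLinearMap.IsPositive.apply_eq_zero_of_isPositive_sub {S T : E →L[𝕜] E}
    (hS : S.IsPositive) (hTS : (T - S).IsPositive) {x : E} (hx : T x = 0) : S x = 0 := by
  refine hS.toLinearMap.apply_eq_zero_of_re_inner_eq_zero
    (le_antisymm ?_ (hS.re_inner_nonneg_left x))
  simpa [hx] using hTS.re_inner_nonneg_left x

theorem LinearMap.IsSymmetric.topologicalClosure_range [CompleteSpace E] {T : E →ₗ[𝕜] E}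
    (hT : T.IsSymmetric) : T.range.topologicalClosure = T.kerᗮ := by
  rw [← Submodule.orthogonal_orthogonal_eq_closure, hT.orthogonal_range]

end

theorem ker_le_ker_of_mem_closure_Lplus {E : Type*} [NormedAddCommGroup E]
    [InnerProductSpace ℂ E] {A B : E →L[ℂ] E} (hB : B ∈ closure (Lplus A)) :
    A.ker ≤ B.ker := by
  have hLplus : Lplus A ⊆ {X | ∀ x, A x = 0 → X x = 0} := by
    rintro X ⟨hX, c, -, hcAX⟩ x hx
    exact hX.apply_eq_zero_of_isPositive_sub hcAX (by simp [hx])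
  have hclosed : IsClosed {X : E →L[ℂ] E | ∀ x, A x = 0 → X x = 0} := by
    simp only [Set.ofPred_forall]
    exact isClosed_iInter fun x ↦ isClosed_iInter fun _ ↦ isClosed_eq (by fun_prop) (by fun_prop)
  exact fun x hx ↦ hclosed.closure_subset_iff.mpr hLplus hB x hx

theorem isPositive_of_mem_closure_Lplus {A B : H →L[ℂ] H} (hB : B ∈ closure (Lplus A)) :
    B.IsPositive := by
  have hB_nonneg : B ∈ Set.Ici 0 :=
    isClosed_Ici.closure_subset_iff.mpr (fun X hX ↦ (X.nonneg_iff_isPositive).mpr hX.1) hB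
  exact B.nonneg_iff_isPositive.mp hB_nonneg

/-- If `B ∈ 𝓛₊(A)` (the norm closure of `L₊(A)`), then
`closure R(B) ⊆ closure R(A)`. -/
theorem closure_range_subset_of_mem_closure_Lplus (A B : H →L[ℂ] H)
    (hA : A.IsPositive) (hB : B ∈ closure (Lplus A)) :
    (LinearMap.range (B : H →ₗ[ℂ] H)).topologicalClosure ≤ (LinearMap.range (A : H →ₗ[ℂ] H)).topologicalClosure := by
  rw [(isPositive_of_mem_closure_Lplus hB).isSymmetric.topologicalClosure_range,
    hA.isSymmetric.topologicalClosure_range]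
  exact Submodule.orthogonal_le (ker_le_ker_of_mem_closure_Lplus hB)
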